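/- Let X ∈ ℝ^{d_in×n}, Y ∈ ℝ^{d_out×n}, σ: ℝ → ℝ applied entrywise, r ∈ ℕ, ε ≥ 0, t ≥ 0, and k ∈ ℕ. Suppose A_T ∈ ℝ^{r×d_in}, B_T ∈ ℝ^{d_out×r} and a matrix G ∈ ℝ^{d_out×n} satisfy ‖Y − B_T σ(A_T X) − G‖₂ ≤ ε and ‖G‖₂ ≤ t, and suppose the infimum E_σ(r) is attained at (A*, B*). Then ‖B_T σ(A_T X) − B* σ(A* X)‖_F ≤ √(r + k) · (t + ε + s_{k+1}(Y)) + s_{>k}(Y) + E_σ(r). -/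

import Mathlib

/-!
Write `M = B_T σ(A_T X)`, `M* = B* σ(A* X)` and let `Y_k` be the rank-`k` truncated singular value
decomposition of `Y`, so that `‖Y - Y_k‖_F = s_{>k}(Y)` and `‖Y - Y_k‖₂ ≤ s_{k+1}(Y)`. Then
`‖M - M*‖_F ≤ ‖Y_k - M‖_F + ‖Y - Y_k‖_F + ‖Y - M*‖_F`, and the last two terms are `s_{>k}(Y)` and
`E_σ(r)`. The matrix `Y_k - M` has rank at most `k + r`, and a matrix `W` of rank `ρ` satisfies
`‖W‖_F ≤ √ρ ‖W‖₂` (its rows lie in a `ρ`-dimensional space). Finally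
`‖Y_k - M‖₂ ≤ ‖Y - M - G‖₂ + ‖G‖₂ + ‖Y - Y_k‖₂ ≤ ε + t + s_{k+1}(Y)`.
-/

open scoped BigOperators

namespace CoLA

noncomputable section

/-- Frobenius norm of a real matrix. -/
def frobNorm {m n : ℕ} (M : Matrix (Fin m) (Fin n) ℝ) : ℝ :=
  Real.sqrt (∑ i, ∑ j, (M i j) ^ 2)

/-- Entrywise application of `σ` to a matrix. -/
def entrywise (σ : ℝ → ℝ) {m n : ℕ} (M : Matrix (Fin m) (Fin n) ℝ) :
    Matrix (Fin m) (Fin n) ℝ :=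
  Matrix.of fun i j => σ (M i j)

/-- `E_σ(r)`. -/
def Esig (σ : ℝ → ℝ) {din dout n : ℕ} (X : Matrix (Fin din) (Fin n) ℝ)
    (Y : Matrix (Fin dout) (Fin n) ℝ) (r : ℕ) : ℝ :=
  ⨅ (A : Matrix (Fin r) (Fin din) ℝ), ⨅ (B : Matrix (Fin dout) (Fin r) ℝ),
    frobNorm (Y - B * entrywise σ (A * X))

/-- `E_id(r)`. -/
def Eid {din dout n : ℕ} (X : Matrix (Fin din) (Fin n) ℝ)
    (Y : Matrix (Fin dout) (Fin n) ℝ) (r : ℕ) : ℝ :=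
  ⨅ (A : Matrix (Fin r) (Fin din) ℝ), ⨅ (B : Matrix (Fin dout) (Fin r) ℝ),
    frobNorm (Y - B * A * X)

/-- The (unsorted) singular values of `M`: square roots of eigenvalues of `Mᴴ * M`. -/
def svAux {m n : ℕ} (M : Matrix (Fin m) (Fin n) ℝ) : Fin n → ℝ :=
  fun i => Real.sqrt ((show (Matrix.transpose M * M).IsHermitian by
    rw [← Matrix.conjTranspose_eq_transpose_of_trivial]
    exact Matrix.isHermitian_conjTranspose_mul_self M).eigenvalues i)

/-- Singular values of `M` sorted in non-increasing order (0-indexed). -/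
def sv {m n : ℕ} (M : Matrix (Fin m) (Fin n) ℝ) : Fin n → ℝ :=
  fun i => svAux M (Tuple.sort (fun j => -(svAux M j)) i)

/-- `k`-th largest singular value (1-indexed, `0` for `k > n`). -/
def sVal {m n : ℕ} (M : Matrix (Fin m) (Fin n) ℝ) (k : ℕ) : ℝ :=
  if h : k - 1 < n then sv M ⟨k - 1, h⟩ else 0

/-- `s_{>k}(M) = √(∑_{j>k} s_j(M)²)` (with `j` 1-indexed). -/
def sGt {m n : ℕ} (M : Matrix (Fin m) (Fin n) ℝ) (k : ℕ) : ℝ :=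
  Real.sqrt (∑ j : Fin n, if k ≤ (j : ℕ) then (sv M j) ^ 2 else 0)

/-- Spectral (ℓ²-operator) norm of a real matrix. -/
def specNorm {m n : ℕ} (M : Matrix (Fin m) (Fin n) ℝ) : ℝ :=
  ‖LinearMap.toContinuousLinearMap (Matrix.toEuclideanLin M)‖

/-- Effective rank `r_α(M)`: the least `k` with `∑_{i≤k} s_i² ≥ α ∑_i s_i²`. -/
def effRank {m n : ℕ} (M : Matrix (Fin m) (Fin n) ℝ) (α : ℝ) : ℕ :=
  sInf {k : ℕ |
    α * ∑ i : Fin n, (sv M i) ^ 2 ≤ ∑ i : Fin n, if (i : ℕ) < k then (sv M i) ^ 2 else 0}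

/-- Row space of `X` inside `Fin n → ℝ`. -/
def rowSpace {d n : ℕ} (X : Matrix (Fin d) (Fin n) ℝ) : Submodule ℝ (Fin n → ℝ) :=
  Submodule.span ℝ (Set.range X)

/-- Row space of `X` as a submodule of Euclidean space. -/
def rowSpaceE {d n : ℕ} (X : Matrix (Fin d) (Fin n) ℝ) :
    Submodule ℝ (EuclideanSpace ℝ (Fin n)) :=
  Submodule.span ℝ (Set.range fun i => (WithLp.equiv 2 (Fin n → ℝ)).symm (X i))

/-- Row-wise orthogonal projection of the rows of `Y` onto the subspace `S`. -/
def projRows {dout n : ℕ} (S : Submodule ℝ (EuclideanSpace ℝ (Fin n)))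
    (Y : Matrix (Fin dout) (Fin n) ℝ) : Matrix (Fin dout) (Fin n) ℝ :=
  Matrix.of fun i => WithLp.equiv 2 (Fin n → ℝ)
    ((S.orthogonalProjectionOnto ((WithLp.equiv 2 (Fin n → ℝ)).symm (Y i)) :
      EuclideanSpace ℝ (Fin n)))

/-- Row-wise orthogonal projection onto the orthogonal complement of `span{v}`. -/
def projVperp {dout n : ℕ} (v : Fin n → ℝ) (Y : Matrix (Fin dout) (Fin n) ℝ) :
    Matrix (Fin dout) (Fin n) ℝ :=
  projRows (Submodule.span ℝ {(WithLp.equiv 2 (Fin n → ℝ)).symm v})ᗮ Y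

open Matrix WithLp
open scoped Matrix.Norms.Frobenius RealInnerProductSpace

section MatrixNorms

variable {m n : ℕ}

lemma frobNorm_eq_norm (M : Matrix (Fin m) (Fin n) ℝ) : frobNorm M = ‖M‖ := by
  rw [frobNorm, frobenius_norm_def, Real.sqrt_eq_rpow]
  simp

lemma frobNorm_nonneg (M : Matrix (Fin m) (Fin n) ℝ) : 0 ≤ frobNorm M := Real.sqrt_nonneg _

lemma frobNorm_sq (M : Matrix (Fin m) (Fin n) ℝ) :
    frobNorm M ^ 2 = ∑ a, ‖toLp 2 (M a)‖ ^ 2 := by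
  rw [frobNorm, Real.sq_sqrt (by positivity)]
  simp_rw [EuclideanSpace.real_norm_sq_eq]

lemma inner_toLp_row (M : Matrix (Fin m) (Fin n) ℝ) (x : EuclideanSpace ℝ (Fin n))
    (a : Fin m) :
    ⟪toLp 2 (M a), x⟫ = toEuclideanLin M x a := by
  rw [toLpLin_apply]
  simp only [PiLp.inner_apply]
  simp [mulVec, dotProduct, mul_comm]

lemma sum_sum_sq_inner_row {ι : Type*} [Fintype ι] (M : Matrix (Fin m) (Fin n) ℝ)
    (u : ι → EuclideanSpace ℝ (Fin n)) :
    ∑ a, ∑ i, ⟪u i, toLp 2 (M a)⟫ ^ 2 = ∑ i, ‖toEuclideanLin M (u i)‖ ^ 2 := by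
  rw [Finset.sum_comm]
  refine Finset.sum_congr rfl fun i _ => ?_
  rw [EuclideanSpace.real_norm_sq_eq]
  exact Finset.sum_congr rfl fun a _ => by rw [real_inner_comm, inner_toLp_row]

lemma frobNorm_sq_eq_sum_norm_sq {ι : Type*} [Fintype ι] (M : Matrix (Fin m) (Fin n) ℝ)
    (b : OrthonormalBasis ι ℝ (EuclideanSpace ℝ (Fin n))) :
    frobNorm M ^ 2 = ∑ i, ‖toEuclideanLin M (b i)‖ ^ 2 := by
  simp_rw [frobNorm_sq, ← b.sum_sq_inner_right]
  exact sum_sum_sq_inner_row M b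

lemma norm_toEuclideanLin_apply_le (M : Matrix (Fin m) (Fin n) ℝ) (x : EuclideanSpace ℝ (Fin n)) :
    ‖toEuclideanLin M x‖ ≤ specNorm M * ‖x‖ :=
  (LinearMap.toContinuousLinearMap (toEuclideanLin M)).le_opNorm x

lemma specNorm_nonneg (M : Matrix (Fin m) (Fin n) ℝ) : 0 ≤ specNorm M := norm_nonneg _

lemma specNorm_add_le (A B : Matrix (Fin m) (Fin n) ℝ) :
    specNorm (A + B) ≤ specNorm A + specNorm B := by
  simp only [specNorm, map_add]
  exact norm_add_le _ _

lemma specNorm_sub_le (A B : Matrix (Fin m) (Fin n) ℝ) :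
    specNorm (A - B) ≤ specNorm A + specNorm B := by
  simp only [specNorm, map_sub]
  exact norm_sub_le _ _

lemma frobNorm_le_sqrt_finrank_mul_specNorm (M : Matrix (Fin m) (Fin n) ℝ)
    (S : Submodule ℝ (EuclideanSpace ℝ (Fin n))) (hM : ∀ a, toLp 2 (M a) ∈ S) :
    frobNorm M ≤ √(Module.finrank ℝ S) * specNorm M := by
  set u := stdOrthonormalBasis ℝ S
  have hsq : frobNorm M ^ 2 ≤ Module.finrank ℝ S * specNorm M ^ 2 :=
    calc frobNorm M ^ 2
        = ∑ a, ∑ i, ⟪(u i : EuclideanSpace ℝ (Fin n)), toLp 2 (M a)⟫ ^ 2 := by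
          rw [frobNorm_sq]
          exact Finset.sum_congr rfl fun a _ => (u.sum_sq_inner_right ⟨_, hM a⟩).symm
      _ = ∑ i, ‖toEuclideanLin M (u i)‖ ^ 2 := sum_sum_sq_inner_row M _
      _ ≤ ∑ i, specNorm M ^ 2 := by
          gcongr with i
          have hu : ‖(u i : EuclideanSpace ℝ (Fin n))‖ = 1 := u.orthonormal.1 i
          simpa [hu] using norm_toEuclideanLin_apply_le M (u i : EuclideanSpace ℝ (Fin n))
      _ = Module.finrank ℝ S * specNorm M ^ 2 := by simp
  calc frobNorm M = √(frobNorm M ^ 2) := (Real.sqrt_sq (frobNorm_nonneg M)).symm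
    _ ≤ √(Module.finrank ℝ S * specNorm M ^ 2) := Real.sqrt_le_sqrt hsq
    _ = √(Module.finrank ℝ S) * specNorm M := by
        rw [Real.sqrt_mul (by positivity), Real.sqrt_sq (specNorm_nonneg M)]

lemma frobNorm_le_sqrt_rank_mul_specNorm (M : Matrix (Fin m) (Fin n) ℝ) :
    frobNorm M ≤ √M.rank * specNorm M := by
  set S := (Submodule.span ℝ (Set.range M)).map
    (WithLp.linearEquiv 2 ℝ (Fin n → ℝ)).symm.toLinearMap
  have hS : Module.finrank ℝ S = M.rank := by
    rw [rank_eq_finrank_span_row, LinearEquiv.finrank_map_eq]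
    rfl
  rw [← hS]
  exact frobNorm_le_sqrt_finrank_mul_specNorm M S fun a =>
    Submodule.mem_map_of_mem (Submodule.subset_span ⟨a, rfl⟩)

end MatrixNorms

lemma _root_.Matrix.rank_sub_le {m n K : Type*} [Finite m] [Field K] [Fintype n]
    (A B : Matrix m n K) : (A - B).rank ≤ A.rank + B.rank := by
  simp only [rank_eq_finrank_span_row]
  refine (Submodule.finrank_mono ?_).trans (Submodule.finrank_add_le_finrank_add_finrank _ _)
  rw [Submodule.span_le]
  rintro _ ⟨a, rfl⟩
  exact Submodule.sub_mem_sup (Submodule.subset_span ⟨a, rfl⟩) (Submodule.subset_span ⟨a, rfl⟩)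

section SingularValueDecomposition

open Finset

variable {m n : ℕ} (Y : Matrix (Fin m) (Fin n) ℝ)

lemma isHermitian_transpose_mul_self : (Yᵀ * Y).IsHermitian := by
  simpa only [conjTranspose_eq_transpose_of_trivial] using isHermitian_conjTranspose_mul_self Y

-- Indexed so that `rightSingularBasis Y j` has singular value `sv Y j`.
def rightSingularBasis : OrthonormalBasis (Fin n) ℝ (EuclideanSpace ℝ (Fin n)) :=
  (isHermitian_transpose_mul_self Y).eigenvectorBasis.reindex
    (Tuple.sort fun j => -svAux Y j).symm

lemma sv_antitone : Antitone (sv Y) := fun _ _ hij =>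
  neg_le_neg_iff.mp (Tuple.monotone_sort (fun j => -svAux Y j) hij)

lemma inner_toEuclideanLin_rightSingularBasis (i j : Fin n) :
    ⟪toEuclideanLin Y (rightSingularBasis Y i), toEuclideanLin Y (rightSingularBasis Y j)⟫ =
      if i = j then sv Y i ^ 2 else 0 := by
  set H := isHermitian_transpose_mul_self Y
  set σ := Tuple.sort fun j => -svAux Y j
  have hb : ∀ i, rightSingularBasis Y i = H.eigenvectorBasis (σ i) := fun i => by
    simp [rightSingularBasis, σ]
  have hinner : ∀ i j, ⟪toEuclideanLin Y (rightSingularBasis Y i),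
      toEuclideanLin Y (rightSingularBasis Y j)⟫ = if i = j then H.eigenvalues (σ i) else 0 := by
    intro i j
    rw [toLpLin_apply, toLpLin_apply, EuclideanSpace.inner_toLp_toLp, star_trivial,
      dotProduct_comm, dotProduct_mulVec, ← mulVec_transpose, mulVec_mulVec, hb, hb,
      H.mulVec_eigenvectorBasis, smul_dotProduct]
    have horth := H.eigenvectorBasis.inner_eq_ite (σ i) (σ j)
    rw [EuclideanSpace.inner_eq_star_dotProduct, star_trivial, dotProduct_comm] at horth
    simp [horth, σ.injective.eq_iff]
  -- `sv Y i` unfolds to `√(H.eigenvalues (σ i))`.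
  have hsv : ∀ i, sv Y i ^ 2 = H.eigenvalues (σ i) := fun i => by
    have hnonneg := real_inner_self_nonneg (x := toEuclideanLin Y (rightSingularBasis Y i))
    rw [hinner, if_pos rfl] at hnonneg
    exact Real.sq_sqrt hnonneg
  rw [hinner, hsv]

lemma norm_toEuclideanLin_sum_smul_rightSingularBasis_sq (s : Finset (Fin n)) (c : Fin n → ℝ) :
    ‖toEuclideanLin Y (∑ j ∈ s, c j • rightSingularBasis Y j)‖ ^ 2 =
      ∑ j ∈ s, c j ^ 2 * sv Y j ^ 2 := by
  simp only [map_sum, map_smul, ← real_inner_self_eq_norm_sq, sum_inner, inner_sum,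
    real_inner_smul_left, real_inner_smul_right, inner_toEuclideanLin_rightSingularBasis]
  refine Finset.sum_congr rfl fun i hi => ?_
  simp [hi]
  ring

-- The truncated singular value decomposition `∑_{j < k} s_j u_j v_jᵀ`, as `s_j u_j = Y v_j`.
def svdTrunc (k : ℕ) : Matrix (Fin m) (Fin n) ℝ :=
  ∑ j ∈ {j : Fin n | (j : ℕ) < k}, vecMulVec (Y *ᵥ rightSingularBasis Y j) (rightSingularBasis Y j)

lemma toEuclideanLin_sub_svdTrunc (k : ℕ) (v : EuclideanSpace ℝ (Fin n)) :
    toEuclideanLin (Y - svdTrunc Y k) v = toEuclideanLin Y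
      (∑ j ∈ {j : Fin n | k ≤ (j : ℕ)}, ⟪rightSingularBasis Y j, v⟫ • rightSingularBasis Y j) := by
  set b := rightSingularBasis Y
  have hrankOne : ∀ j, toEuclideanLin (vecMulVec (Y *ᵥ b j) (b j)) v =
      ⟪b j, v⟫ • toEuclideanLin Y (b j) := fun j => by
    rw [toLpLin_apply, toLpLin_apply, vecMulVec_mulVec, op_smul_eq_smul, WithLp.toLp_smul,
      EuclideanSpace.inner_eq_star_dotProduct, star_trivial, dotProduct_comm]
  have hsplit := sum_filter_add_sum_filter_not univ (fun j : Fin n => (j : ℕ) < k)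
    fun j => ⟪b j, v⟫ • toEuclideanLin Y (b j)
  simp only [not_lt] at hsplit
  rw [map_sub, LinearMap.sub_apply, svdTrunc, map_sum, LinearMap.sum_apply,
    Finset.sum_congr rfl fun j _ => hrankOne j]
  conv_lhs => enter [1]; rw [← b.sum_repr' v]
  simp only [map_sum, map_smul]
  rw [← hsplit, add_sub_cancel_left]

lemma norm_toEuclideanLin_rightSingularBasis_sq (i : Fin n) :
    ‖toEuclideanLin Y (rightSingularBasis Y i)‖ ^ 2 = sv Y i ^ 2 := by
  rw [← real_inner_self_eq_norm_sq, inner_toEuclideanLin_rightSingularBasis, if_pos rfl]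

lemma toEuclideanLin_sub_svdTrunc_rightSingularBasis (k : ℕ) (i : Fin n) :
    toEuclideanLin (Y - svdTrunc Y k) (rightSingularBasis Y i) =
      if k ≤ (i : ℕ) then toEuclideanLin Y (rightSingularBasis Y i) else 0 := by
  rw [toEuclideanLin_sub_svdTrunc]
  simp only [OrthonormalBasis.inner_eq_ite, ite_smul, one_smul, zero_smul,
    Finset.sum_ite_eq', Finset.mem_filter, Finset.mem_univ, true_and]
  split_ifs <;> simp

lemma frobNorm_sub_svdTrunc (k : ℕ) : frobNorm (Y - svdTrunc Y k) = sGt Y k := by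
  rw [sGt, ← Real.sqrt_sq (frobNorm_nonneg _),
    frobNorm_sq_eq_sum_norm_sq _ (rightSingularBasis Y)]
  congr 1
  refine Finset.sum_congr rfl fun i _ => ?_
  rw [toEuclideanLin_sub_svdTrunc_rightSingularBasis]
  split_ifs <;> simp [norm_toEuclideanLin_rightSingularBasis_sq]

lemma sVal_nonneg (k : ℕ) : 0 ≤ sVal Y k := by
  unfold sVal
  split_ifs
  exacts [Real.sqrt_nonneg _, le_rfl]

lemma sv_le_sVal_succ {k : ℕ} {j : Fin n} (hj : k ≤ (j : ℕ)) : sv Y j ≤ sVal Y (k + 1) := by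
  have hk : k + 1 - 1 < n := by omega
  rw [sVal, dif_pos hk]
  exact sv_antitone Y (by simpa [Fin.le_def] using hj)

lemma specNorm_sub_svdTrunc_le (k : ℕ) : specNorm (Y - svdTrunc Y k) ≤ sVal Y (k + 1) := by
  refine ContinuousLinearMap.opNorm_le_bound _ (sVal_nonneg Y _) fun v => ?_
  set b := rightSingularBasis Y
  refine le_of_pow_le_pow_left₀ two_ne_zero (by positivity [sVal_nonneg Y (k + 1)]) ?_
  calc ‖toEuclideanLin (Y - svdTrunc Y k) v‖ ^ 2
      = ∑ j ∈ {j : Fin n | k ≤ (j : ℕ)}, ⟪b j, v⟫ ^ 2 * sv Y j ^ 2 := by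
        rw [toEuclideanLin_sub_svdTrunc, norm_toEuclideanLin_sum_smul_rightSingularBasis_sq]
    _ ≤ ∑ j ∈ {j : Fin n | k ≤ (j : ℕ)}, ⟪b j, v⟫ ^ 2 * sVal Y (k + 1) ^ 2 := by
        gcongr with j hj
        · exact Real.sqrt_nonneg _
        · exact sv_le_sVal_succ Y (Finset.mem_filter.mp hj).2
    _ ≤ ∑ j, ⟪b j, v⟫ ^ 2 * sVal Y (k + 1) ^ 2 :=
        Finset.sum_le_sum_of_subset_of_nonneg (Finset.subset_univ _) fun _ _ _ => by positivity
    _ = (sVal Y (k + 1) * ‖v‖) ^ 2 := by rw [← Finset.sum_mul, b.sum_sq_inner_right]; ring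

lemma rank_svdTrunc_le (k : ℕ) : (svdTrunc Y k).rank ≤ k := by
  set b := rightSingularBasis Y
  set T : Finset (Fin n) := {j : Fin n | (j : ℕ) < k}
  have hrow : ∀ a, (svdTrunc Y k).row a = ∑ j ∈ T, (Y *ᵥ b j) a • ⇑(b j) := fun a => by
    ext l
    simp [svdTrunc, Matrix.row, Matrix.sum_apply, Finset.sum_apply, vecMulVec_apply, T, b]
  rw [rank_eq_finrank_span_row]
  calc Module.finrank ℝ (Submodule.span ℝ (Set.range (svdTrunc Y k).row))
      ≤ Module.finrank ℝ (Submodule.span ℝ ((T.image fun j => ⇑(b j) : Finset _) :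
          Set (Fin n → ℝ))) := by
        refine Submodule.finrank_mono (Submodule.span_le.2 ?_)
        rintro _ ⟨a, rfl⟩
        rw [hrow]
        exact Submodule.sum_mem _ fun j hj => Submodule.smul_mem _ _
          (Submodule.subset_span (Finset.mem_coe.2 (Finset.mem_image_of_mem _ hj)))
    _ ≤ (T.image fun j => ⇑(b j)).card := finrank_span_finset_le_card _
    _ ≤ T.card := Finset.card_image_le
    _ ≤ k := by rw [Fin.card_filter_val_lt]; exact min_le_right _ _

end SingularValueDecomposition

theorem stmt4_general {din dout n r : ℕ} (k : ℕ)
    (X : Matrix (Fin din) (Fin n) ℝ) (Y : Matrix (Fin dout) (Fin n) ℝ)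
    (σ : ℝ → ℝ) (ε t : ℝ)
    (AT : Matrix (Fin r) (Fin din) ℝ) (BT : Matrix (Fin dout) (Fin r) ℝ)
    (G : Matrix (Fin dout) (Fin n) ℝ)
    (hfit : specNorm (Y - BT * entrywise σ (AT * X) - G) ≤ ε)
    (hG : specNorm G ≤ t)
    (Astar : Matrix (Fin r) (Fin din) ℝ) (Bstar : Matrix (Fin dout) (Fin r) ℝ)
    (hopt : frobNorm (Y - Bstar * entrywise σ (Astar * X)) = Esig σ X Y r) :
    frobNorm (BT * entrywise σ (AT * X) - Bstar * entrywise σ (Astar * X)) ≤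
      Real.sqrt ((r : ℝ) + k) * (t + ε + sVal Y (k + 1)) + sGt Y k + Esig σ X Y r := by
  set M := BT * entrywise σ (AT * X)
  set Mstar := Bstar * entrywise σ (Astar * X)
  set Yk := svdTrunc Y k
  have hrank : (Yk - M).rank ≤ r + k := by
    have := (rank_sub_le Yk M).trans
      (add_le_add (rank_svdTrunc_le Y k) ((rank_mul_le_left BT _).trans (rank_le_width BT)))
    omega
  have hspec : specNorm (Yk - M) ≤ t + ε + sVal Y (k + 1) :=
    calc specNorm (Yk - M) = specNorm ((Y - M - G) + G - (Y - Yk)) := by abel_nf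
      _ ≤ specNorm (Y - M - G) + specNorm G + specNorm (Y - Yk) :=
        (specNorm_sub_le _ _).trans (add_le_add_left (specNorm_add_le _ _) _)
      _ ≤ t + ε + sVal Y (k + 1) := by
        linarith [specNorm_sub_svdTrunc_le Y k]
  have hlowRank : frobNorm (Yk - M) ≤ √(r + k) * (t + ε + sVal Y (k + 1)) :=
    calc frobNorm (Yk - M) ≤ √(Yk - M).rank * specNorm (Yk - M) :=
          frobNorm_le_sqrt_rank_mul_specNorm _
      _ ≤ √(r + k) * (t + ε + sVal Y (k + 1)) := by
          gcongr
          · exact specNorm_nonneg _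
          · exact_mod_cast hrank
  rw [← hopt, ← frobNorm_sub_svdTrunc Y k]
  simp only [frobNorm_eq_norm] at hlowRank ⊢
  calc ‖M - Mstar‖ = ‖-(Yk - M) - (Y - Yk) + (Y - Mstar)‖ := by abel_nf
    _ ≤ ‖Yk - M‖ + ‖Y - Yk‖ + ‖Y - Mstar‖ := by
      refine (norm_add_le _ _).trans (add_le_add_left ((norm_sub_le _ _).trans ?_) _)
      rw [norm_neg]
    _ ≤ _ := by gcongr

/-- deterministic core of Theorem 2: if
`‖Y − B_T σ(A_T X) − G‖₂ ≤ ε`, `‖G‖₂ ≤ t`, and the infimum `E_σ(r)` is attained at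
`(A*, B*)`, then
`‖B_T σ(A_T X) − B* σ(A* X)‖_F ≤ √(r+k)(t + ε + s_{k+1}(Y)) + s_{>k}(Y) + E_σ(r)`. -/
theorem stmt4 {din dout n r : ℕ} (k : ℕ)
    (X : Matrix (Fin din) (Fin n) ℝ) (Y : Matrix (Fin dout) (Fin n) ℝ)
    (σ : ℝ → ℝ) (ε t : ℝ) (hε : 0 ≤ ε) (ht : 0 ≤ t)
    (AT : Matrix (Fin r) (Fin din) ℝ) (BT : Matrix (Fin dout) (Fin r) ℝ)
    (G : Matrix (Fin dout) (Fin n) ℝ)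
    (hfit : specNorm (Y - BT * entrywise σ (AT * X) - G) ≤ ε)
    (hG : specNorm G ≤ t)
    (Astar : Matrix (Fin r) (Fin din) ℝ) (Bstar : Matrix (Fin dout) (Fin r) ℝ)
    (hopt : frobNorm (Y - Bstar * entrywise σ (Astar * X)) = Esig σ X Y r) :
    frobNorm (BT * entrywise σ (AT * X) - Bstar * entrywise σ (Astar * X)) ≤
      Real.sqrt ((r : ℝ) + k) * (t + ε + sVal Y (k + 1)) + sGt Y k + Esig σ X Y r :=
  stmt4_general k X Y σ ε t AT BT G hfit hG Astar Bstar hopt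

end

end CoLA
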